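/- Let (a,b) be a perplex parameter, n ≥ 1, and let c₀, c₁, …, cₙ ∈ ℝ² with cₙ ≠ 0. Define the polynomial function f(x) := cₙ * x^n + ⋯ + c₂ * x² + c₁ * x + c₀, where x^k is the k-fold *-power. Then f is ℙ_{a,b}-differentiable at every x ∈ ℝ² with derivative f'(x) = n·cₙ * x^{n−1} + ⋯ + 2·c₂ * x + c₁. -/

import Mathlib

open Filter Topology

noncomputable section

/-- The perplex product on `ℝ²` determined by the parameters `a = (a₁,a₂,a₃)`,
`b = (b₁,b₂,b₃)`. -/
def pmul (a₁ a₂ a₃ b₁ b₂ b₃ : ℝ) (x y : ℝ × ℝ) : ℝ × ℝ :=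
  (a₁ * x.1 * y.1 + a₂ * (x.1 * y.2 + x.2 * y.1) + a₃ * x.2 * y.2,
   b₁ * x.1 * y.1 + b₂ * (x.1 * y.2 + x.2 * y.1) + b₃ * x.2 * y.2)

/-- `(a,b)` is a perplex parameter: conditions (i)-(iv). -/
def IsPerplexParam (a₁ a₂ a₃ b₁ b₂ b₃ : ℝ) : Prop :=
  a₁ * a₃ - a₂ ^ 2 ≠ 0 ∧ a₁ * b₂ - a₂ * b₁ ≠ 0 ∧
    a₂ * b₂ - a₃ * b₁ = 0 ∧ a₁ * a₃ - a₂ ^ 2 + a₂ * b₃ - a₃ * b₂ = 0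

/-- The multiplicative identity `𝟙` of the perplex algebra. -/
def pone (a₁ a₂ b₁ b₂ : ℝ) : ℝ × ℝ :=
  (1 / (a₁ * b₂ - a₂ * b₁)) • ((b₂, -b₁) : ℝ × ℝ)

/-- The perplex norm `N`. -/
def pN (a₁ a₂ a₃ b₁ b₂ b₃ : ℝ) (x : ℝ × ℝ) : ℝ :=
  (a₁ * b₂ - a₂ * b₁) * x.1 ^ 2 + (a₁ * b₃ - a₃ * b₁) * x.1 * x.2 -
    (a₁ * a₃ - a₂ ^ 2) * x.2 ^ 2

/-- The Euclidean norm on `ℝ²`. -/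
noncomputable def enorm2 (x : ℝ × ℝ) : ℝ := Real.sqrt (x.1 ^ 2 + x.2 ^ 2)

open Classical in
/-- The `*`-inverse of `x` (junk value `0` if `x` is not invertible). -/
noncomputable def pinv (a₁ a₂ a₃ b₁ b₂ b₃ : ℝ) (x : ℝ × ℝ) : ℝ × ℝ :=
  if h : ∃ y, pmul a₁ a₂ a₃ b₁ b₂ b₃ x y = pone a₁ a₂ b₁ b₂ then h.choose else 0

/-- `n`-fold `*`-power of `x`, with `x ^ 0 := 𝟙`. -/
def ppow (a₁ a₂ a₃ b₁ b₂ b₃ : ℝ) (x : ℝ × ℝ) : ℕ → ℝ × ℝ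
  | 0 => pone a₁ a₂ b₁ b₂
  | n + 1 => pmul a₁ a₂ a₃ b₁ b₂ b₃ x (ppow a₁ a₂ a₃ b₁ b₂ b₃ x n)

/-- A sequence of invertible elements converging to `0` that is positively
separated from the zero-divisor directions. -/
def PosSep (a₁ a₂ a₃ b₁ b₂ b₃ : ℝ) (h : ℕ → ℝ × ℝ) : Prop :=
  (∀ n, ∃ y, pmul a₁ a₂ a₃ b₁ b₂ b₃ (h n) y = pone a₁ a₂ b₁ b₂) ∧
    Tendsto h atTop (nhds 0) ∧
      ∃ c > 0, ∀ n, c ≤ |pN a₁ a₂ a₃ b₁ b₂ b₃ ((enorm2 (h n))⁻¹ • h n)|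

/-- `f` is `ℙ_{a,b}`-differentiable at `x` with derivative `L`: the difference
quotients along every positively separated sequence converge, on a whole
neighborhood of `x`, to a value depending continuously on the base point, with
value `L` at `x`. -/
def PDiffAt (a₁ a₂ a₃ b₁ b₂ b₃ : ℝ) (f : ℝ × ℝ → ℝ × ℝ) (L : ℝ × ℝ)
    (x : ℝ × ℝ) : Prop :=
  ∃ U ∈ nhds x, ∃ d : ℝ × ℝ → ℝ × ℝ, d x = L ∧ ContinuousOn d U ∧
    ∀ y ∈ U, ∀ h : ℕ → ℝ × ℝ, PosSep a₁ a₂ a₃ b₁ b₂ b₃ h →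
      Tendsto
        (fun n => pmul a₁ a₂ a₃ b₁ b₂ b₃ (f (y + h n) - f y)
          (pinv a₁ a₂ a₃ b₁ b₂ b₃ (h n)))
        atTop (nhds (d y))

/-!
Under conditions (i)–(iv) the product `*` is commutative, associative and unital, so `ℝ²`
becomes a commutative topological ring. In such a ring a polynomial has a continuous divided
difference: `f z - f y = (z - y) * Φ y z` with `Φ y z = ∑ₖ cₖ ∑_{i<k} zⁱ y^(k-1-i)`, and
`Φ x x = ∑ₖ k cₖ x^(k-1)`. Multiplying the increment `f (y + h) - f y = h * Φ y (y + h)` by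
`h⁻¹` leaves `Φ y (y + h)`, which tends to `Φ y y` as `h → 0`.
-/

open Finset

section CommRing

variable {R : Type*} [CommRing R]

theorem sum_mul_pow_sub_sum_mul_pow (s : Finset ℕ) (c : ℕ → R) (y z : R) :
    ∑ k ∈ s, c k * z ^ k - ∑ k ∈ s, c k * y ^ k =
      (z - y) * ∑ k ∈ s, c k * ∑ i ∈ range k, z ^ i * y ^ (k - 1 - i) := by
  rw [← sum_sub_distrib, mul_sum]
  refine sum_congr rfl fun k _ => ?_
  rw [← mul_sub, ← geom_sum₂_mul]
  ring

theorem sum_range_succ_mul_geom_sum₂_self (n : ℕ) (c : ℕ → R) (y : R) :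
    ∑ k ∈ range (n + 1), c k * ∑ i ∈ range k, y ^ i * y ^ (k - 1 - i) =
      ∑ k ∈ range n, (k + 1) • (c (k + 1) * y ^ k) := by
  simp only [geom_sum₂_self, sum_range_succ', Nat.add_sub_cancel, nsmul_eq_mul, Nat.cast_zero,
    zero_mul, mul_zero, add_zero, Nat.cast_add, Nat.cast_one]
  refine sum_congr rfl fun k _ => ?_
  ring

end CommRing

section PerplexProduct

variable {a₁ a₂ a₃ b₁ b₂ b₃ : ℝ}

theorem pmul_comm (x y : ℝ × ℝ) :
    pmul a₁ a₂ a₃ b₁ b₂ b₃ x y = pmul a₁ a₂ a₃ b₁ b₂ b₃ y x := by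
  ext <;> simp only [pmul] <;> ring

theorem pmul_add (x y z : ℝ × ℝ) :
    pmul a₁ a₂ a₃ b₁ b₂ b₃ x (y + z) =
      pmul a₁ a₂ a₃ b₁ b₂ b₃ x y + pmul a₁ a₂ a₃ b₁ b₂ b₃ x z := by
  ext <;> simp only [pmul, Prod.fst_add, Prod.snd_add] <;> ring

theorem add_pmul (x y z : ℝ × ℝ) :
    pmul a₁ a₂ a₃ b₁ b₂ b₃ (x + y) z =
      pmul a₁ a₂ a₃ b₁ b₂ b₃ x z + pmul a₁ a₂ a₃ b₁ b₂ b₃ y z := by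
  ext <;> simp only [pmul, Prod.fst_add, Prod.snd_add] <;> ring

theorem zero_pmul (x : ℝ × ℝ) : pmul a₁ a₂ a₃ b₁ b₂ b₃ 0 x = 0 := by
  ext <;> simp [pmul]

theorem IsPerplexParam.b_sq_sub (hp : IsPerplexParam a₁ a₂ a₃ b₁ b₂ b₃) :
    b₂ ^ 2 - b₁ * b₃ = a₁ * b₂ - a₂ * b₁ := by
  obtain ⟨h1, -, h3, h4⟩ := hp
  by_cases ha₃ : a₃ = 0
  · subst ha₃
    have ha₂ : a₂ ≠ 0 := by rintro rfl; exact h1 (by ring)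
    have hb₂ : b₂ = 0 := by simpa [ha₂] using h3
    have hb₃ : b₃ = a₂ := by
      have : a₂ * (b₃ - a₂) = 0 := by linear_combination h4
      simpa [ha₂, sub_eq_zero] using this
    subst hb₂ hb₃
    ring
  · have : a₃ * (b₂ ^ 2 - b₁ * b₃ - (a₁ * b₂ - a₂ * b₁)) = 0 := by
      linear_combination (-b₂) * h4 + (b₃ - a₂) * h3
    simpa [ha₃, sub_eq_zero] using this

theorem IsPerplexParam.pmul_assoc (hp : IsPerplexParam a₁ a₂ a₃ b₁ b₂ b₃) (x y z : ℝ × ℝ) :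
    pmul a₁ a₂ a₃ b₁ b₂ b₃ (pmul a₁ a₂ a₃ b₁ b₂ b₃ x y) z =
      pmul a₁ a₂ a₃ b₁ b₂ b₃ x (pmul a₁ a₂ a₃ b₁ b₂ b₃ y z) := by
  have hb := hp.b_sq_sub
  obtain ⟨-, -, h3, h4⟩ := hp
  ext <;> simp only [pmul]
  · linear_combination (x.2 * y.1 * z.1 - x.1 * y.1 * z.2) * h3 +
      (x.2 * y.2 * z.1 - x.1 * y.2 * z.2) * h4
  · linear_combination (x.2 * y.1 * z.1 - x.1 * y.1 * z.2) * hb +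
      (x.1 * y.2 * z.2 - x.2 * y.2 * z.1) * h3

theorem IsPerplexParam.pmul_pone (hp : IsPerplexParam a₁ a₂ a₃ b₁ b₂ b₃) (x : ℝ × ℝ) :
    pmul a₁ a₂ a₃ b₁ b₂ b₃ x (pone a₁ a₂ b₁ b₂) = x := by
  have hb := hp.b_sq_sub
  obtain ⟨-, h2, h3, -⟩ := hp
  have hD : (a₁ * b₂ - a₂ * b₁)⁻¹ * (a₁ * b₂ - a₂ * b₁) = 1 := inv_mul_cancel₀ h2
  ext <;> simp only [pmul, pone, one_div, Prod.smul_mk, smul_eq_mul]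
  · linear_combination x.1 * hD + (a₁ * b₂ - a₂ * b₁)⁻¹ * x.2 * h3
  · linear_combination x.2 * hD + (a₁ * b₂ - a₂ * b₁)⁻¹ * x.2 * hb

theorem IsPerplexParam.pmul_pmul_pinv (hp : IsPerplexParam a₁ a₂ a₃ b₁ b₂ b₃) {x : ℝ × ℝ}
    (hx : ∃ y, pmul a₁ a₂ a₃ b₁ b₂ b₃ x y = pone a₁ a₂ b₁ b₂) (g : ℝ × ℝ) :
    pmul a₁ a₂ a₃ b₁ b₂ b₃ (pmul a₁ a₂ a₃ b₁ b₂ b₃ x g) (pinv a₁ a₂ a₃ b₁ b₂ b₃ x) = g := by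
  rw [pmul_comm x, hp.pmul_assoc, pinv, dif_pos hx, hx.choose_spec, hp.pmul_pone]

theorem IsPerplexParam.pDiffAt_of_sub_eq_pmul (hp : IsPerplexParam a₁ a₂ a₃ b₁ b₂ b₃)
    {f : ℝ × ℝ → ℝ × ℝ} (Φ : ℝ × ℝ → ℝ × ℝ → ℝ × ℝ) (hΦ : Continuous (Function.uncurry Φ))
    (hf : ∀ y z, f z - f y = pmul a₁ a₂ a₃ b₁ b₂ b₃ (z - y) (Φ y z)) (x : ℝ × ℝ) :
    PDiffAt a₁ a₂ a₃ b₁ b₂ b₃ f (Φ x x) x := by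
  refine ⟨Set.univ, univ_mem, fun y => Φ y y, rfl,
    (hΦ.comp (continuous_id.prodMk continuous_id)).continuousOn, fun y _ h hh => ?_⟩
  obtain ⟨hinv, hlim, -⟩ := hh
  have hquot (m : ℕ) : Φ y (y + h m) =
      pmul a₁ a₂ a₃ b₁ b₂ b₃ (f (y + h m) - f y) (pinv a₁ a₂ a₃ b₁ b₂ b₃ (h m)) := by
    rw [hf, add_sub_cancel_left, hp.pmul_pmul_pinv (hinv m)]
  have hmove : Tendsto (fun m => y + h m) atTop (𝓝 y) := by
    simpa using tendsto_const_nhds.add hlim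
  exact ((hΦ.tendsto (y, y)).comp (tendsto_const_nhds.prodMk_nhds hmove)).congr hquot

end PerplexProduct

-- `ℝ²` with the perplex product; the parameters only select the ring structure.
def Perplex (_ _ _ _ _ _ : ℝ) : Type := ℝ × ℝ

namespace Perplex

variable (a₁ a₂ a₃ b₁ b₂ b₃ : ℝ)

instance : AddCommGroup (Perplex a₁ a₂ a₃ b₁ b₂ b₃) := inferInstanceAs (AddCommGroup (ℝ × ℝ))

instance : TopologicalSpace (Perplex a₁ a₂ a₃ b₁ b₂ b₃) :=
  inferInstanceAs (TopologicalSpace (ℝ × ℝ))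

variable [Fact (IsPerplexParam a₁ a₂ a₃ b₁ b₂ b₃)]

-- `npow` is `ppow`, so that `x ^ k` unfolds to the `*`-power of the statement.
instance : CommRing (Perplex a₁ a₂ a₃ b₁ b₂ b₃) where
  __ := (inferInstance : AddCommGroup (Perplex a₁ a₂ a₃ b₁ b₂ b₃))
  mul := pmul a₁ a₂ a₃ b₁ b₂ b₃
  one := pone a₁ a₂ b₁ b₂
  npow k x := ppow a₁ a₂ a₃ b₁ b₂ b₃ x k
  npow_zero _ := rfl
  npow_succ _ _ := pmul_comm _ _
  mul_assoc := (Fact.out : IsPerplexParam a₁ a₂ a₃ b₁ b₂ b₃).pmul_assoc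
  one_mul x := (pmul_comm _ _).trans ((Fact.out : IsPerplexParam a₁ a₂ a₃ b₁ b₂ b₃).pmul_pone x)
  mul_one := (Fact.out : IsPerplexParam a₁ a₂ a₃ b₁ b₂ b₃).pmul_pone
  mul_comm := pmul_comm
  left_distrib := pmul_add
  right_distrib := add_pmul
  zero_mul := zero_pmul
  mul_zero x := (pmul_comm _ _).trans (zero_pmul x)

instance : IsTopologicalRing (Perplex a₁ a₂ a₃ b₁ b₂ b₃) where
  continuous_add := continuous_add (M := ℝ × ℝ)
  continuous_neg := continuous_neg (G := ℝ × ℝ)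
  continuous_mul := by
    change Continuous fun p : (ℝ × ℝ) × (ℝ × ℝ) => pmul a₁ a₂ a₃ b₁ b₂ b₃ p.1 p.2
    unfold pmul
    fun_prop

variable {a₁ a₂ a₃ b₁ b₂ b₃}

theorem pDiffAt_of_eq_sum_mul_pow {f : Perplex a₁ a₂ a₃ b₁ b₂ b₃ → Perplex a₁ a₂ a₃ b₁ b₂ b₃}
    (c : ℕ → Perplex a₁ a₂ a₃ b₁ b₂ b₃) (n : ℕ)
    (hf : ∀ y, f y = ∑ k ∈ range (n + 1), c k * y ^ k) (x : Perplex a₁ a₂ a₃ b₁ b₂ b₃) :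
    PDiffAt a₁ a₂ a₃ b₁ b₂ b₃ f (∑ k ∈ range n, (k + 1) • (c (k + 1) * x ^ k)) x := by
  have hp : IsPerplexParam a₁ a₂ a₃ b₁ b₂ b₃ := Fact.out
  have hdiff := hp.pDiffAt_of_sub_eq_pmul (f := f)
    (fun y z : Perplex a₁ a₂ a₃ b₁ b₂ b₃ =>
      ∑ k ∈ range (n + 1), c k * ∑ i ∈ range k, z ^ i * y ^ (k - 1 - i))
    (by fun_prop) (fun (y z : Perplex a₁ a₂ a₃ b₁ b₂ b₃) =>
      (congrArg₂ (· - ·) (hf z) (hf y)).trans (sum_mul_pow_sub_sum_mul_pow _ c y z)) x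
  exact sum_range_succ_mul_geom_sum₂_self n c x ▸ hdiff

end Perplex

theorem polynomial_pdiff_general (a₁ a₂ a₃ b₁ b₂ b₃ : ℝ)
    (hp : IsPerplexParam a₁ a₂ a₃ b₁ b₂ b₃)
    (n : ℕ) (c : ℕ → ℝ × ℝ)
    (f : ℝ × ℝ → ℝ × ℝ)
    (hf : ∀ x : ℝ × ℝ, f x = ∑ k ∈ Finset.range (n + 1), pmul a₁ a₂ a₃ b₁ b₂ b₃ (c k) (ppow a₁ a₂ a₃ b₁ b₂ b₃ x k)) :
    ∀ x : ℝ × ℝ,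
      PDiffAt a₁ a₂ a₃ b₁ b₂ b₃ f
        (∑ k ∈ Finset.range n, ((k + 1 : ℕ) : ℝ) • pmul a₁ a₂ a₃ b₁ b₂ b₃ (c (k + 1)) (ppow a₁ a₂ a₃ b₁ b₂ b₃ x k))
        x := by
  have : Fact (IsPerplexParam a₁ a₂ a₃ b₁ b₂ b₃) := ⟨hp⟩
  intro x
  simp only [Nat.cast_smul_eq_nsmul]
  exact Perplex.pDiffAt_of_eq_sum_mul_pow c n hf x

/-- A `*`-polynomial function is `ℙ_{a,b}`-differentiable with the expected
derivative. -/
theorem polynomial_pdiff (a₁ a₂ a₃ b₁ b₂ b₃ : ℝ)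
    (hp : IsPerplexParam a₁ a₂ a₃ b₁ b₂ b₃)
    (n : ℕ) (hn : 1 ≤ n) (c : ℕ → ℝ × ℝ) (hc : c n ≠ 0)
    (f : ℝ × ℝ → ℝ × ℝ)
    (hf : ∀ x : ℝ × ℝ, f x = ∑ k ∈ Finset.range (n + 1), pmul a₁ a₂ a₃ b₁ b₂ b₃ (c k) (ppow a₁ a₂ a₃ b₁ b₂ b₃ x k)) :
    ∀ x : ℝ × ℝ,
      PDiffAt a₁ a₂ a₃ b₁ b₂ b₃ f
        (∑ k ∈ Finset.range n, ((k + 1 : ℕ) : ℝ) • pmul a₁ a₂ a₃ b₁ b₂ b₃ (c (k + 1)) (ppow a₁ a₂ a₃ b₁ b₂ b₃ x k))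
        x :=
  polynomial_pdiff_general a₁ a₂ a₃ b₁ b₂ b₃ hp n c f hf
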